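/- arXiv:2502.04136 — 3 statements merged into one kernel-verified Lean document; each statement's English description precedes it below -/
import Mathlib

section
/- For integers r ≥ 2 and m ≥ 1, the number of permutations of {1,...,rm} all of whose cycle lengths are not divisible by r equals (rm)! · (r-1)(2r-1)⋯(mr-1) / (r^m · m!). -/
/-!
Let `a n` count the `r`-regular permutations of `n` points and `g n c` the pairs `(x, σ)` such
that no cycle of `σ` avoiding `x` has length divisible by `r`, while the cycle of `x` has length
`≡ c [MOD r]`. A permutation of `Option α` arises exactly once from a permutation `τ` of `α`,
either by adding `none` as a fixed point or by inserting `none` into the cycle of some `p` just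
before `p`; this lengthens that cycle by one and leaves the other cycles alone. Marking `none`,
and using that all points are alike up to conjugation, gives
`a (n + 1) = a n + ∑ c < r - 1, g n c` and
`g (n + 1) (c + 1 mod r) = (n + 1) ([c = 0] a n + g n c)`.
By induction `(r - 1) g n c = (r ⌊n / r⌋ + [1 ≤ c ≤ n mod r] (r - 1)) a n`, hence
`a (n + 1) = n a n` if `r ∣ n + 1` and `a (n + 1) = (n + 1) a n` otherwise, and the product of
these factors is the formula.
-/

open Equiv Equiv.Perm Function Finset

variable {α β : Type*}

lemma minimalPeriod_eq_of_iterate_apply {f : α → α} {g : β → β} {e : α → β}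
    (he : Injective e) {x : α} (h : ∀ k, g^[k] (e x) = e (f^[k] x)) :
    minimalPeriod g (e x) = minimalPeriod f x :=
  minimalPeriod_eq_minimalPeriod_iff.2 fun n => by
    simp only [IsPeriodicPt, IsFixedPt, h, he.eq_iff]

lemma Equiv.Perm.sameCycle_iff_exists_iterate [Finite α] {σ : Perm α} {x y : α} :
    σ.SameCycle x y ↔ ∃ k : ℕ, σ^[k] x = y := by
  simp only [← coe_pow]
  exact ⟨SameCycle.exists_nat_pow_eq, fun ⟨k, hk⟩ => ⟨k, by rwa [zpow_natCast]⟩⟩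

lemma Equiv.permCongr_iterate_apply (e : α ≃ β) (σ : Perm α) (k : ℕ) (x : α) :
    (e.permCongr σ)^[k] (e x) = e (σ^[k] x) :=
  (Semiconj.iterate_right (f := e) (fun y => by simp [permCongr_apply]) k x).symm

lemma Equiv.minimalPeriod_permCongr_apply (e : α ≃ β) (σ : Perm α) (x : α) :
    minimalPeriod (e.permCongr σ) (e x) = minimalPeriod σ x :=
  minimalPeriod_eq_of_iterate_apply e.injective (e.permCongr_iterate_apply σ · x)

lemma Equiv.sameCycle_permCongr_apply (e : α ≃ β) (σ : Perm α) (x y : α) :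
    (e.permCongr σ).SameCycle (e x) (e y) ↔ σ.SameCycle x y := by
  have h (i : ℤ) : (e.permCongr σ ^ i) (e x) = e ((σ ^ i) x) := by
    rw [← permCongrHom_coe, ← map_zpow, permCongrHom_coe, permCongr_apply, symm_apply_apply]
  simp only [SameCycle, h, e.apply_eq_iff_eq]

def IsRegularPerm (r : ℕ) (σ : Perm α) : Prop :=
  ∀ x, ¬ r ∣ minimalPeriod σ x

def IsRegularAwayFrom (r : ℕ) (σ : Perm α) (x : α) : Prop :=
  ∀ y, ¬ σ.SameCycle x y → ¬ r ∣ minimalPeriod σ y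

section Regular

variable {r : ℕ}

lemma isRegularPerm_iff [Finite α] {σ : Perm α} (x : α) :
    IsRegularPerm r σ ↔ IsRegularAwayFrom r σ x ∧ ¬ r ∣ minimalPeriod σ x := by
  refine ⟨fun h => ⟨fun y _ => h y, h x⟩, fun ⟨h, hx⟩ y => ?_⟩
  by_cases hy : σ.SameCycle x y
  · obtain ⟨k, rfl⟩ := sameCycle_iff_exists_iterate.1 hy
    rwa [minimalPeriod_apply_iterate (σ.injective.mem_periodicPts x)]
  · exact h y hy

lemma isRegularPerm_permCongr_iff (e : α ≃ β) {σ : Perm α} :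
    IsRegularPerm r (e.permCongr σ) ↔ IsRegularPerm r σ := by
  rw [IsRegularPerm, ← e.forall_congr_right]
  simp only [e.minimalPeriod_permCongr_apply, IsRegularPerm]

lemma isRegularAwayFrom_permCongr_iff (e : α ≃ β) {σ : Perm α} {x : α} :
    IsRegularAwayFrom r (e.permCongr σ) (e x) ↔ IsRegularAwayFrom r σ x := by
  rw [IsRegularAwayFrom, ← e.forall_congr_right]
  simp only [e.minimalPeriod_permCongr_apply, e.sameCycle_permCongr_apply, IsRegularAwayFrom]

end Regular

namespace Equiv.Perm

variable {r : ℕ} (τ : Perm α)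

lemma minimalPeriod_optionCongr_some (y : α) :
    minimalPeriod τ.optionCongr (some y) = minimalPeriod τ y :=
  minimalPeriod_eq_of_iterate_apply (Option.some_injective α)
    fun k => (Semiconj.iterate_right (f := some) (ga := τ) (fun _ => rfl) k y).symm

lemma minimalPeriod_optionCongr_none : minimalPeriod τ.optionCongr none = 1 :=
  minimalPeriod_eq_one_iff_isFixedPt.2 rfl

lemma isRegularAwayFrom_optionCongr_none_iff :
    IsRegularAwayFrom r τ.optionCongr none ↔ IsRegularPerm r τ := by
  have hfix : IsFixedPt τ.optionCongr none := rfl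
  refine ⟨fun h y => ?_, fun h z hz => ?_⟩
  · rw [← minimalPeriod_optionCongr_some]
    exact h _ fun hy => Option.some_ne_none y (hy.eq_of_left hfix).symm
  · cases z with
    | none => exact absurd (SameCycle.refl _ _) hz
    | some y => rw [minimalPeriod_optionCongr_some]; exact h y

variable [DecidableEq α]

def insertBefore (p : α) : Perm (Option α) :=
  swap none (some p) * τ.optionCongr

variable {τ} {p : α}

lemma insertBefore_none : τ.insertBefore p none = some p := by
  simp [insertBefore]

lemma insertBefore_some (y : α) :
    τ.insertBefore p (some y) = if τ y = p then none else some (τ y) := by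
  split_ifs with h
  · simp [insertBefore, h]
  · simp [insertBefore, swap_apply_of_ne_of_ne, h]

lemma insertBefore_iterate_succ_none {k : ℕ} (hk : k < minimalPeriod τ p) :
    (τ.insertBefore p)^[k + 1] none = some (τ^[k] p) := by
  induction k with
  | zero => exact insertBefore_none
  | succ k ih =>
    have hne : τ (τ^[k] p) ≠ p := by
      rw [← iterate_succ_apply' τ]
      exact not_isPeriodicPt_of_pos_of_lt_minimalPeriod k.succ_ne_zero hk
    rw [iterate_succ_apply', ih (by omega), insertBefore_some, if_neg hne, iterate_succ_apply']

variable [Finite α]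

lemma insertBefore_iterate_some {y : α} (h : ¬ τ.SameCycle p y) (k : ℕ) :
    (τ.insertBefore p)^[k] (some y) = some (τ^[k] y) := by
  induction k with
  | zero => rfl
  | succ k ih =>
    have hne : τ (τ^[k] y) ≠ p := fun hk =>
      h (sameCycle_iff_exists_iterate.2 ⟨k + 1, by rw [iterate_succ_apply', hk]⟩).symm
    rw [iterate_succ_apply', ih, insertBefore_some, if_neg hne, iterate_succ_apply']

lemma minimalPeriod_insertBefore_none :
    minimalPeriod (τ.insertBefore p) none = minimalPeriod τ p + 1 := by
  obtain ⟨ℓ, hℓ⟩ := Nat.exists_eq_add_one.2 (minimalPeriod_pos_of_mem_periodicPts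
    (τ.injective.mem_periodicPts p))
  have hper : IsPeriodicPt (τ.insertBefore p) (minimalPeriod τ p + 1) none := by
    have hp : τ (τ^[ℓ] p) = p := by
      rw [← iterate_succ_apply' τ, ← Nat.add_one, ← hℓ, iterate_minimalPeriod]
    rw [IsPeriodicPt, IsFixedPt, hℓ, iterate_succ_apply',
      insertBefore_iterate_succ_none (by omega), insertBefore_some, if_pos hp]
  refine le_antisymm (hper.minimalPeriod_le (by omega)) (Nat.succ_le_of_lt ?_)
  by_contra! hle
  obtain ⟨i, hi⟩ := Nat.exists_eq_add_one.2 (minimalPeriod_pos_of_mem_periodicPts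
    ((τ.insertBefore p).injective.mem_periodicPts none))
  have hfix := iterate_minimalPeriod (f := τ.insertBefore p) (x := none)
  rw [hi, insertBefore_iterate_succ_none (by omega)] at hfix
  exact Option.some_ne_none _ hfix

lemma minimalPeriod_insertBefore_some {y : α} (h : ¬ τ.SameCycle p y) :
    minimalPeriod (τ.insertBefore p) (some y) = minimalPeriod τ y :=
  minimalPeriod_eq_of_iterate_apply (Option.some_injective α) (insertBefore_iterate_some h)

lemma sameCycle_insertBefore_none_some_iff {y : α} :
    (τ.insertBefore p).SameCycle none (some y) ↔ τ.SameCycle p y := by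
  constructor
  · intro h
    by_contra hy
    obtain ⟨k, hk⟩ := sameCycle_iff_exists_iterate.1 h.symm
    rw [insertBefore_iterate_some hy] at hk
    exact Option.some_ne_none _ hk
  · intro h
    obtain ⟨k, rfl⟩ := sameCycle_iff_exists_iterate.1 h
    have hk := Nat.mod_lt k (minimalPeriod_pos_of_mem_periodicPts (τ.injective.mem_periodicPts p))
    refine sameCycle_iff_exists_iterate.2 ⟨k % minimalPeriod τ p + 1, ?_⟩
    rw [insertBefore_iterate_succ_none hk, iterate_mod_minimalPeriod_eq]

lemma isRegularAwayFrom_insertBefore_none_iff :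
    IsRegularAwayFrom r (τ.insertBefore p) none ↔ IsRegularAwayFrom r τ p := by
  refine ⟨fun h y hy => ?_, fun h z hz => ?_⟩
  · rw [← minimalPeriod_insertBefore_some hy]
    exact h _ (sameCycle_insertBefore_none_some_iff.not.2 hy)
  · cases z with
    | none => exact absurd (SameCycle.refl _ _) hz
    | some y =>
      have hy := sameCycle_insertBefore_none_some_iff.not.1 hz
      rw [minimalPeriod_insertBefore_some hy]
      exact h y hy

end Equiv.Perm

noncomputable def regularCount (r : ℕ) (α : Type*) : ℕ :=
  Nat.card {σ : Perm α // IsRegularPerm r σ}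

noncomputable def pointedCount (r c : ℕ) (x : α) : ℕ :=
  Nat.card {σ : Perm α // IsRegularAwayFrom r σ x ∧ minimalPeriod σ x % r = c}

noncomputable def markedCount (r c : ℕ) (α : Type*) [Fintype α] : ℕ :=
  ∑ x : α, pointedCount r c x

section Counting

variable {r c : ℕ}

lemma regularCount_congr (e : α ≃ β) : regularCount r β = regularCount r α :=
  Nat.card_congr (e.permCongr.subtypeEquiv fun _ => (isRegularPerm_permCongr_iff e).symm).symm

lemma pointedCount_congr (e : α ≃ β) (x : α) : pointedCount r c (e x) = pointedCount r c x :=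
  Nat.card_congr (e.permCongr.subtypeEquiv fun σ => by
    rw [isRegularAwayFrom_permCongr_iff, e.minimalPeriod_permCongr_apply]).symm

lemma markedCount_eq_card_mul [Fintype α] [DecidableEq α] (x : α) :
    markedCount r c α = Fintype.card α * pointedCount r c x := by
  have h (y : α) : pointedCount r c y = pointedCount r c x := by
    simpa using pointedCount_congr (r := r) (c := c) (swap x y) x
  rw [markedCount, sum_congr rfl fun y _ => h y, sum_const, card_univ, smul_eq_mul]

lemma regularCount_eq_sum_pointedCount [Fintype α] (hr : 0 < r) (x : α) :
    regularCount r α = ∑ c ∈ Ico 1 r, pointedCount r c x := by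
  classical
  simp only [regularCount, pointedCount, Nat.card_eq_fintype_card, Fintype.card_subtype]
  rw [card_eq_sum_card_fiberwise (f := fun σ : Perm α => minimalPeriod σ x % r) (t := Ico 1 r)]
  · refine sum_congr rfl fun c hc => congrArg card (Finset.ext fun σ => ?_)
    simp only [mem_Ico] at hc
    simp only [mem_filter, mem_univ, true_and, isRegularPerm_iff x, Nat.dvd_iff_mod_eq_zero]
    constructor
    · rintro ⟨⟨h, -⟩, hc'⟩; exact ⟨h, hc'⟩
    · rintro ⟨h, hc'⟩; exact ⟨⟨h, by omega⟩, hc'⟩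
  · intro σ hσ
    simp only [coe_filter, mem_univ, true_and, isRegularPerm_iff x,
      Nat.dvd_iff_mod_eq_zero] at hσ
    simp only [coe_Ico, Set.mem_Ico]
    exact ⟨Nat.one_le_iff_ne_zero.2 hσ.2, Nat.mod_lt _ hr⟩

lemma add_one_mod_eq_add_one_mod_iff {a r : ℕ} (hc : c < r) :
    (a + 1) % r = (c + 1) % r ↔ a % r = c := by
  rw [← Nat.ModEq, ← Nat.mod_eq_of_lt hc, ← Nat.ModEq, Nat.mod_eq_of_lt hc]
  exact ⟨Nat.ModEq.add_right_cancel' 1, Nat.ModEq.add_right 1⟩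

lemma card_perm_option [Fintype α] [DecidableEq α] (P : Perm (Option α) → Prop) :
    Nat.card {σ // P σ} = Nat.card {τ : Perm α // P τ.optionCongr} +
      ∑ p, Nat.card {τ : Perm α // P (τ.insertBefore p)} := by
  rw [Nat.card_congr (decomposeOption.subtypeEquiv (q := fun x => P (decomposeOption.symm x))
      fun σ => by rw [symm_apply_apply]),
    Nat.card_congr (subtypeProdEquivSigmaSubtype fun o τ => P (decomposeOption.symm (o, τ))),
    Nat.card_sigma, Fintype.sum_option]
  congr 1
  exact Nat.card_congr (subtypeEquivRight fun τ => by
    rw [decomposeOption_symm_apply, swap_self, ← Perm.one_def, one_mul])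

lemma pointedCount_none [Fintype α] [DecidableEq α] (hc : c < r) :
    pointedCount r ((c + 1) % r) (none : Option α) =
      (if c = 0 then regularCount r α else 0) + markedCount r c α := by
  rw [pointedCount, card_perm_option]
  congr 1
  · have hiff (τ : Perm α) : (IsRegularAwayFrom r τ.optionCongr none ∧
        minimalPeriod τ.optionCongr none % r = (c + 1) % r) ↔ IsRegularPerm r τ ∧ c = 0 := by
      rw [isRegularAwayFrom_optionCongr_none_iff, minimalPeriod_optionCongr_none, ← zero_add 1,
        add_one_mod_eq_add_one_mod_iff hc, Nat.zero_mod, eq_comm]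
    rw [Nat.card_congr (subtypeEquivRight hiff)]
    split_ifs with h0
    · simp only [h0, and_true]; rfl
    · simp [h0]
  · refine sum_congr rfl fun p _ => Nat.card_congr (subtypeEquivRight fun τ => ?_)
    rw [isRegularAwayFrom_insertBefore_none_iff, minimalPeriod_insertBefore_none,
      add_one_mod_eq_add_one_mod_iff hc]

lemma regularCount_option [Fintype α] [DecidableEq α] (hr : 2 ≤ r) :
    regularCount r (Option α) =
      regularCount r α + ∑ c ∈ range (r - 1), markedCount r c α := by
  have h (c : ℕ) (hc : c ∈ range (r - 1)) : pointedCount r (1 + c) (none : Option α) =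
      (if c = 0 then regularCount r α else 0) + markedCount r c α := by
    rw [mem_range] at hc
    rw [add_comm, ← Nat.mod_eq_of_lt (show c + 1 < r by omega), pointedCount_none (by omega)]
  rw [regularCount_eq_sum_pointedCount (by omega) none, sum_Ico_eq_sum_range, sum_congr rfl h,
    sum_add_distrib, sum_ite_eq', if_pos (by simp; omega)]

lemma regularCount_of_isEmpty [IsEmpty α] : regularCount r α = 1 :=
  (Nat.card_congr (subtypeUnivEquiv fun _ x => isEmptyElim x)).trans Nat.card_unique

lemma regularCount_fin_succ (hr : 2 ≤ r) (n : ℕ) :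
    regularCount r (Fin (n + 1)) =
      regularCount r (Fin n) + ∑ c ∈ range (r - 1), markedCount r c (Fin n) := by
  rw [regularCount_congr (finSuccEquiv n).symm, regularCount_option hr]

lemma markedCount_fin_succ {n : ℕ} (hc : c < r) :
    markedCount r ((c + 1) % r) (Fin (n + 1)) =
      (n + 1) * ((if c = 0 then regularCount r (Fin n) else 0) + markedCount r c (Fin n)) := by
  rw [markedCount_eq_card_mul 0, Fintype.card_fin, ← pointedCount_congr (finSuccEquiv n),
    finSuccEquiv_zero, pointedCount_none hc]

end Counting

def markedWeight (r n c : ℕ) : ℕ := r * (n / r) + if 1 ≤ c ∧ c ≤ n % r then r - 1 else 0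

lemma dvd_add_one_iff_mod_eq {r n : ℕ} (hr : 0 < r) : r ∣ n + 1 ↔ n % r = r - 1 := by
  have hs := Nat.mod_lt n hr
  conv_lhs => rw [← Nat.div_add_mod n r, add_assoc, Nat.dvd_add_right (dvd_mul_right r _)]
  refine ⟨fun h => ?_, fun h => by rw [h, Nat.sub_add_cancel hr]⟩
  have := Nat.le_of_dvd (Nat.succ_pos _) h
  omega

lemma add_one_div_mod_of_dvd {r n : ℕ} (h : r ∣ n + 1) :
    (n + 1) / r = n / r + 1 ∧ (n + 1) % r = 0 :=
  ⟨by rw [Nat.succ_div, if_pos h], Nat.mod_eq_zero_of_dvd h⟩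

lemma add_one_div_mod_of_not_dvd {r n : ℕ} (h : ¬ r ∣ n + 1) :
    (n + 1) / r = n / r ∧ (n + 1) % r = n % r + 1 := by
  have hdiv : (n + 1) / r = n / r := by rw [Nat.succ_div, if_neg h, add_zero]
  have h1 := Nat.div_add_mod (n + 1) r
  have h2 := Nat.div_add_mod n r
  rw [hdiv] at h1
  exact ⟨hdiv, by omega⟩

lemma sum_markedWeight {r : ℕ} (hr : 2 ≤ r) (n : ℕ) :
    r - 1 + ∑ c ∈ range (r - 1), markedWeight r n c =
      (r - 1) * (if r ∣ n + 1 then n else n + 1) := by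
  have hfilter : {c ∈ range (r - 1) | 1 ≤ c ∧ c ≤ n % r} = Icc 1 (min (n % r) (r - 2)) := by
    ext c; simp only [mem_filter, mem_range, mem_Icc]; omega
  have hsum : ∑ c ∈ range (r - 1), markedWeight r n c =
      (r - 1) * (r * (n / r) + min (n % r) (r - 2)) := by
    simp only [markedWeight, sum_add_distrib, sum_ite, sum_const_zero, sum_const, hfilter,
      card_range, Nat.card_Icc, smul_eq_mul]
    rw [Nat.add_sub_cancel]; ring
  rw [hsum, ← mul_one_add]
  have hn := Nat.div_add_mod n r
  have hs := Nat.mod_lt n (show 0 < r by omega)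
  have hdvd := dvd_add_one_iff_mod_eq (n := n) (show 0 < r by omega)
  congr 1
  split_ifs <;> omega

lemma markedWeight_succ {r c : ℕ} (hr : 2 ≤ r) (hc : c < r) (n : ℕ) :
    (n + 1) * ((if c = 0 then r - 1 else 0) + markedWeight r n c) =
      markedWeight r (n + 1) ((c + 1) % r) * (if r ∣ n + 1 then n else n + 1) := by
  have hn := Nat.div_add_mod n r
  have hs := Nat.mod_lt n (show 0 < r by omega)
  by_cases h : r ∣ n + 1
  · obtain ⟨hdiv, hmod⟩ := add_one_div_mod_of_dvd h
    have hmod' := (dvd_add_one_iff_mod_eq (show 0 < r by omega)).1 h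
    have hl : (if c = 0 then r - 1 else 0) + markedWeight r n c = n := by
      unfold markedWeight; split_ifs <;> omega
    have hr' : markedWeight r (n + 1) ((c + 1) % r) = n + 1 := by
      unfold markedWeight; rw [hdiv, hmod, Nat.mul_succ]; split_ifs <;> omega
    rw [hl, hr', if_pos h, mul_comm]
  · obtain ⟨hdiv, hmod⟩ := add_one_div_mod_of_not_dvd h
    have hmod' := mt (dvd_add_one_iff_mod_eq (show 0 < r by omega)).2 h
    have : (if c = 0 then r - 1 else 0) + markedWeight r n c =
        markedWeight r (n + 1) ((c + 1) % r) := by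
      unfold markedWeight
      rw [hdiv, hmod]
      rcases (show c + 1 < r ∨ c + 1 = r by omega) with h1 | h1
      · rw [Nat.mod_eq_of_lt h1]; split_ifs <;> omega
      · rw [h1, Nat.mod_self]; split_ifs <;> omega
    rw [this, if_neg h, mul_comm]

lemma mul_pow_mul_factorial_eq {r : ℕ} {a : ℕ → ℕ} (h0 : a 0 = 1)
    (hsucc : ∀ n, a (n + 1) = (if r ∣ n + 1 then n else n + 1) * a n) (n : ℕ) :
    a n * (r ^ (n / r) * (n / r).factorial) =
      n.factorial * ∏ k ∈ Icc 1 (n / r), (k * r - 1) := by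
  induction n with
  | zero => simp [h0]
  | succ n ih =>
    by_cases h : r ∣ n + 1
    · have hdiv := (add_one_div_mod_of_dvd h).1
      have hn : r * (n / r + 1) = n + 1 := by rw [← hdiv, Nat.mul_div_cancel' h]
      rw [hsucc, if_pos h, hdiv, prod_Icc_succ_top (Nat.le_add_left 1 _), mul_comm (n / r + 1) r,
        hn, Nat.add_sub_cancel, Nat.factorial_succ, Nat.factorial_succ n, pow_succ]
      calc n * a n * (r ^ (n / r) * r * ((n / r + 1) * (n / r).factorial))
          = a n * (r ^ (n / r) * (n / r).factorial) * n * (r * (n / r + 1)) := by ring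
        _ = _ := by rw [ih, hn]; ring
    · rw [hsucc, if_neg h, (add_one_div_mod_of_not_dvd h).1, Nat.factorial_succ, mul_assoc, ih,
        mul_assoc]

section Recurrence

variable {r : ℕ} {a : ℕ → ℕ} {g : ℕ → ℕ → ℕ}

lemma succ_eq_mul_of_markedWeight (hr : 2 ≤ r) {n : ℕ}
    (ha : a (n + 1) = a n + ∑ c ∈ range (r - 1), g n c)
    (hg : ∀ c < r, (r - 1) * g n c = markedWeight r n c * a n) :
    a (n + 1) = (if r ∣ n + 1 then n else n + 1) * a n := by
  apply Nat.eq_of_mul_eq_mul_left (show 0 < r - 1 by omega)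
  calc (r - 1) * a (n + 1) = (r - 1) * a n + ∑ c ∈ range (r - 1), (r - 1) * g n c := by
        rw [ha, mul_add, mul_sum]
    _ = (r - 1 + ∑ c ∈ range (r - 1), markedWeight r n c) * a n := by
        rw [sum_congr rfl fun c hc => hg c (by simp at hc; omega), ← sum_mul, add_mul]
    _ = (r - 1) * ((if r ∣ n + 1 then n else n + 1) * a n) := by
        rw [sum_markedWeight hr, mul_assoc]

lemma mul_eq_markedWeight_mul (hr : 2 ≤ r) (hg0 : ∀ c, g 0 c = 0)
    (ha : ∀ n, a (n + 1) = a n + ∑ c ∈ range (r - 1), g n c)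
    (hg : ∀ n c, c < r →
      g (n + 1) ((c + 1) % r) = (n + 1) * ((if c = 0 then a n else 0) + g n c))
    (n : ℕ) : ∀ c < r, (r - 1) * g n c = markedWeight r n c * a n := by
  induction n with
  | zero =>
    intro c _
    rw [hg0, markedWeight, Nat.zero_div, Nat.zero_mod, if_neg (by omega)]
    simp
  | succ n ih =>
    intro c₀ hc₀
    obtain ⟨c, hc, rfl⟩ : ∃ c < r, c₀ = (c + 1) % r := by
      rcases Nat.eq_zero_or_pos c₀ with rfl | h
      · exact ⟨r - 1, by omega, by rw [Nat.sub_add_cancel (by omega), Nat.mod_self]⟩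
      · exact ⟨c₀ - 1, by omega, by rw [Nat.sub_add_cancel h, Nat.mod_eq_of_lt hc₀]⟩
    rw [hg n c hc, succ_eq_mul_of_markedWeight hr (ha n) ih,
      ← mul_assoc (markedWeight r (n + 1) _), ← markedWeight_succ hr hc]
    calc (r - 1) * ((n + 1) * ((if c = 0 then a n else 0) + g n c))
        = (n + 1) * ((if c = 0 then (r - 1) * a n else 0) + (r - 1) * g n c) := by
          split_ifs <;> ring
      _ = _ := by rw [ih c hc]; split_ifs <;> ring

end Recurrence

lemma regularCount_fin_succ_eq_mul {r : ℕ} (hr : 2 ≤ r) (n : ℕ) :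
    regularCount r (Fin (n + 1)) =
      (if r ∣ n + 1 then n else n + 1) * regularCount r (Fin n) := by
  have hmarked := mul_eq_markedWeight_mul (a := fun n => regularCount r (Fin n))
    (g := fun n c => markedCount r c (Fin n)) hr (fun _ => by simp [markedCount])
    (regularCount_fin_succ hr) (fun _ _ hc => markedCount_fin_succ hc) n
  exact succ_eq_mul_of_markedWeight (a := fun n => regularCount r (Fin n))
    (g := fun n c => markedCount r c (Fin n)) hr (regularCount_fin_succ hr n) hmarked

theorem stmt0_general (r m : ℕ) (hr : 2 ≤ r) :
    Nat.card {σ : Equiv.Perm (Fin (r * m)) //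
        ∀ x, ¬ r ∣ Function.minimalPeriod ⇑σ x} * (r ^ m * Nat.factorial m) =
      Nat.factorial (r * m) * ∏ k ∈ Finset.Icc 1 m, (k * r - 1) := by
  have h := mul_pow_mul_factorial_eq (a := fun n => regularCount r (Fin n))
    regularCount_of_isEmpty (regularCount_fin_succ_eq_mul hr) (r * m)
  rwa [Nat.mul_div_cancel_left m (by omega)] at h

/-- |Reg_r(rm)| · r^m · m! = (rm)! · (r-1)(2r-1)⋯(mr-1). -/
theorem stmt0 (r m : ℕ) (hr : 2 ≤ r) (hm : 1 ≤ m) :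
    Nat.card {σ : Equiv.Perm (Fin (r * m)) //
        ∀ x, ¬ r ∣ Function.minimalPeriod ⇑σ x} * (r ^ m * Nat.factorial m) =
      Nat.factorial (r * m) * ∏ k ∈ Finset.Icc 1 m, (k * r - 1) :=
  stmt0_general r m hr
end

section
/- For all r ≥ 2 and n ≥ 1 with n+1 not divisible by r, |Reg_r(n+1)| = (n+1) · |Reg_r(n)|. -/
/-!
Count permutations of `Fin (m + 1)` by the length `k + 1` of the cycle through `0`: filling that
cycle takes `m.descFactorial k` choices, so
`|Reg_r(m + 1)| = ∑_{k ≤ m, r ∤ k + 1} m.descFactorial k * |Reg_r(m - k)|`.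
Comparing this recurrence at `m + 1` and at `m` shifts the excluded residue class by one. When
`r ∤ m + 2`, strong induction shows that the two terms straddling each excluded position agree
(`|Reg_r(m - k)| = (m - k) * |Reg_r(m - k - 1)|` because `r ∤ m - k`), so the shift costs
nothing and `|Reg_r(m + 2)| = |Reg_r(m + 1)| + (m + 1) * |Reg_r(m + 1)|`.
-/

open Equiv Function Finset

namespace Function

variable {α β : Type*} {f : α → α} {g : β → β} {e : β → α} {x : β}

theorem iterate_apply_eq_of_forall_lt {n : ℕ}
    (h : ∀ i < n, f (e (g^[i] x)) = e (g^[i + 1] x)) : f^[n] (e x) = e (g^[n] x) := by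
  induction n with
  | zero => rfl
  | succ n ih => rw [iterate_succ_apply', ih fun i hi => h i (by omega), h n n.lt_succ_self]

theorem minimalPeriod_eq_of_iterate (he : Injective e) (h : ∀ n, f^[n] (e x) = e (g^[n] x)) :
    minimalPeriod f (e x) = minimalPeriod g x :=
  minimalPeriod_eq_minimalPeriod_iff.mpr fun n => by
    simp only [IsPeriodicPt, IsFixedPt, h, he.eq_iff]

end Function

theorem Nat.card_subtype_eq_sum_card_fiberwise {α : Type*} [Fintype α] {P : α → Prop}
    {f : α → ℕ} {t : Finset ℕ} (h : ∀ a, P a → f a ∈ t) :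
    Nat.card {a // P a} = ∑ k ∈ t, Nat.card {a // P a ∧ f a = k} := by
  classical
  simp only [Nat.card_eq_fintype_card, Fintype.card_subtype, ← filter_filter]
  exact card_eq_sum_card_fiberwise fun a ha => h a (mem_filter.mp ha).2

theorem Finset.sum_range_ite_dvd_shift {r : ℕ} (hr : ¬ r ∣ 1) (f : ℕ → ℕ) (N : ℕ)
    (hf : ∀ k < N, r ∣ k + 2 → f (k + 1) = f k) :
    ∑ k ∈ range (N + 1), (if r ∣ k + 1 then 0 else f k) =
      ∑ k ∈ range (N + 1), (if r ∣ k + 2 then 0 else f k) +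
        if r ∣ N + 2 then f N else 0 := by
  induction N with
  | zero => by_cases h2 : r ∣ 2 <;> simp [hr, h2]
  | succ N ih =>
    rw [sum_range_succ, ih fun k hk => hf k (by omega), sum_range_succ _ (N + 1)]
    by_cases hN : r ∣ N + 2
    · have := hf N N.lt_succ_self hN
      split_ifs <;> omega
    · split_ifs <;> omega

namespace Equiv.Perm

variable {α : Type*}

theorem minimalPeriod_pos [Finite α] (σ : Perm α) (x : α) : 0 < minimalPeriod σ x :=
  minimalPeriod_pos_of_mem_periodicPts (σ.injective.mem_periodicPts x)

theorem sameCycle_iterate (σ : Perm α) (x : α) (n : ℕ) : σ.SameCycle x (σ^[n] x) := by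
  rw [← coe_pow]
  exact sameCycle_pow_right.mpr (.refl σ x)

theorem iterate_ne_of_not_sameCycle {σ : Perm α} {x y : α} (h : ¬ σ.SameCycle y x)
    (n : ℕ) : σ^[n] x ≠ y :=
  fun hn => h (hn ▸ sameCycle_iterate σ x n).symm

theorem SameCycle.minimalPeriod_eq [Finite α] {σ : Perm α} {x y : α} (h : σ.SameCycle x y) :
    minimalPeriod σ y = minimalPeriod σ x := by
  obtain ⟨n, rfl⟩ := h.exists_nat_pow_eq
  rw [coe_pow]
  exact minimalPeriod_apply_iterate (σ.injective.mem_periodicPts x) n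

theorem minimalPeriod_conj (c σ : Perm α) (x : α) :
    minimalPeriod (c * σ * c⁻¹) x = minimalPeriod σ (c⁻¹ x) := by
  have hc : Semiconj c σ (c * σ * c⁻¹) := fun y => by simp
  simpa using
    minimalPeriod_eq_of_iterate c.injective fun n => ((hc.iterate_right n) (c⁻¹ x)).symm

def RegularAwayFrom (r : ℕ) (σ : Perm α) (z : α) : Prop :=
  ∀ x, ¬ σ.SameCycle z x → ¬ r ∣ minimalPeriod σ x

theorem forall_not_dvd_minimalPeriod_iff [Finite α] {r : ℕ} {σ : Perm α} (z : α) :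
    (∀ x, ¬ r ∣ minimalPeriod σ x) ↔
      ¬ r ∣ minimalPeriod σ z ∧ RegularAwayFrom r σ z := by
  refine ⟨fun h => ⟨h z, fun x _ => h x⟩, fun ⟨hz, h⟩ x => ?_⟩
  by_cases hx : σ.SameCycle z x
  · rwa [hx.minimalPeriod_eq]
  · exact h x hx

theorem regularAwayFrom_conj {r : ℕ} (c σ : Perm α) (z : α) :
    RegularAwayFrom r (c * σ * c⁻¹) (c z) ↔ RegularAwayFrom r σ z := by
  simp only [RegularAwayFrom, sameCycle_conj, minimalPeriod_conj, coe_inv, symm_apply_apply]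
  exact c.symm.forall_congr_right
    (q := fun x => ¬ σ.SameCycle z x → ¬ r ∣ minimalPeriod σ x)

noncomputable def markedCount (r : ℕ) (z : α) (k : ℕ) : ℕ :=
  Nat.card {σ : Perm α // minimalPeriod σ z = k ∧ RegularAwayFrom r σ z}

theorem markedCount_perm_apply (r : ℕ) (c : Perm α) (z : α) (k : ℕ) :
    markedCount r (c z) k = markedCount r z k := by
  refine (Nat.card_congr (subtypeEquiv (MulAut.conj c).toEquiv fun σ => ?_)).symm
  simp only [MulEquiv.toEquiv_eq_coe, EquivLike.coe_coe, MulAut.conj_apply,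
    minimalPeriod_conj, regularAwayFrom_conj, coe_inv, symm_apply_apply]

theorem card_subtype_perm_fin_succ {m : ℕ} (P : Perm (Fin (m + 1)) → Prop) :
    Nat.card {σ // P σ} =
      ∑ p, Nat.card {τ : Perm (Fin m) // P (decomposeFin.symm (p, τ))} := by
  rw [← Nat.card_sigma]
  refine Nat.card_congr ((decomposeFin.subtypeEquiv fun σ => ?_).trans
    (subtypeProdEquivSigmaSubtype fun p τ => P (decomposeFin.symm (p, τ))))
  rw [symm_apply_apply]

section decomposeFin

-- `decomposeFin.symm (q.succ, τ)` is `τ` with `0` inserted into the cycle of `q` just before `q`;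
-- `decomposeFin.symm (0, τ)` is `τ` with `0` added as a fixed point.

variable {m : ℕ} (τ : Perm (Fin m))

theorem iterate_decomposeFin_symm_apply_succ {p : Fin (m + 1)} {x : Fin m} {n : ℕ}
    (h : ∀ i < n, (τ^[i + 1] x).succ ≠ p) :
    (decomposeFin.symm (p, τ))^[n] x.succ = (τ^[n] x).succ := by
  refine iterate_apply_eq_of_forall_lt fun i hi => ?_
  rw [decomposeFin_symm_apply_succ, ← iterate_succ_apply' τ,
    swap_apply_of_ne_of_ne (Fin.succ_ne_zero _) (h i hi)]

theorem minimalPeriod_decomposeFin_symm_apply_succ {p : Fin (m + 1)} {x : Fin m}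
    (h : ∀ i, (τ^[i + 1] x).succ ≠ p) :
    minimalPeriod (decomposeFin.symm (p, τ)) x.succ = minimalPeriod τ x :=
  minimalPeriod_eq_of_iterate (Fin.succ_injective m) fun _ =>
    iterate_decomposeFin_symm_apply_succ τ fun i _ => h i

variable (q : Fin m)

theorem iterate_decomposeFin_symm_succ_zero {n : ℕ} (hn : n < minimalPeriod τ q) :
    (decomposeFin.symm (q.succ, τ))^[n + 1] 0 = (τ^[n] q).succ := by
  rw [iterate_succ_apply, decomposeFin_symm_apply_zero]
  refine iterate_decomposeFin_symm_apply_succ τ fun i hi hq => ?_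
  have hper : IsPeriodicPt τ (i + 1) q := Fin.succ_injective m hq
  exact i.succ_ne_zero (hper.eq_zero_of_lt_minimalPeriod (by omega))

theorem minimalPeriod_decomposeFin_symm_succ_zero :
    minimalPeriod (decomposeFin.symm (q.succ, τ)) 0 = minimalPeriod τ q + 1 := by
  set σ := decomposeFin.symm (q.succ, τ)
  obtain ⟨K, hK⟩ := Nat.exists_eq_add_one_of_ne_zero (minimalPeriod_pos τ q).ne'
  have hper : IsPeriodicPt σ (K + 2) 0 := by
    have hq : τ (τ^[K] q) = q := by
      simpa only [hK, iterate_succ_apply'] using iterate_minimalPeriod (f := τ) (x := q)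
    rw [IsPeriodicPt, IsFixedPt, iterate_succ_apply', iterate_decomposeFin_symm_succ_zero τ q
      (by omega), decomposeFin_symm_apply_succ, hq, swap_apply_right]
  obtain ⟨j, hj⟩ := Nat.exists_eq_add_one_of_ne_zero (minimalPeriod_pos σ 0).ne'
  have hle := hper.minimalPeriod_le (by omega)
  by_contra hne
  have hfix : σ^[j + 1] 0 = 0 := hj ▸ iterate_minimalPeriod
  rw [iterate_decomposeFin_symm_succ_zero τ q (by omega)] at hfix
  exact Fin.succ_ne_zero _ hfix

theorem sameCycle_decomposeFin_symm_succ_zero_succ_iff {x : Fin m} :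
    (decomposeFin.symm (q.succ, τ)).SameCycle 0 x.succ ↔ τ.SameCycle q x := by
  constructor
  · intro h
    by_contra hx
    obtain ⟨n, hn⟩ := h.symm.exists_nat_pow_eq
    rw [coe_pow, iterate_decomposeFin_symm_apply_succ τ fun i _ hi =>
      iterate_ne_of_not_sameCycle hx (i + 1) (Fin.succ_injective m hi)] at hn
    exact Fin.succ_ne_zero _ hn
  · intro h
    obtain ⟨n, rfl⟩ := h.exists_nat_pow_eq
    rw [coe_pow, ← iterate_mod_minimalPeriod_eq, ← iterate_decomposeFin_symm_succ_zero τ q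
      (Nat.mod_lt _ (minimalPeriod_pos τ q))]
    exact sameCycle_iterate _ 0 _

theorem regularAwayFrom_decomposeFin_symm_succ_zero_iff {r : ℕ} :
    RegularAwayFrom r (decomposeFin.symm (q.succ, τ)) 0 ↔ RegularAwayFrom r τ q := by
  simp only [RegularAwayFrom, Fin.forall_fin_succ, SameCycle.refl, not_true, false_imp_iff,
    sameCycle_decomposeFin_symm_succ_zero_succ_iff, true_and]
  refine forall_congr' fun x => imp_congr_right fun hx => ?_
  rw [minimalPeriod_decomposeFin_symm_apply_succ τ fun i hi =>
    iterate_ne_of_not_sameCycle hx (i + 1) (Fin.succ_injective m hi)]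

theorem regularAwayFrom_decomposeFin_symm_zero_zero_iff {r : ℕ} :
    RegularAwayFrom r (decomposeFin.symm (0, τ)) 0 ↔ ∀ x, ¬ r ∣ minimalPeriod τ x := by
  have hfix : IsFixedPt (decomposeFin.symm (0, τ)) 0 := decomposeFin_symm_apply_zero 0 τ
  simp only [RegularAwayFrom, Fin.forall_fin_succ, SameCycle.refl, not_true, false_imp_iff,
    true_and, minimalPeriod_decomposeFin_symm_apply_succ τ fun _ => Fin.succ_ne_zero _]
  exact forall_congr' fun x => ⟨fun h => h fun hx => Fin.succ_ne_zero x (hx.eq_of_left hfix).symm,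
    fun h _ => h⟩

end decomposeFin

noncomputable def regCard (r n : ℕ) : ℕ :=
  Nat.card {σ : Perm (Fin n) // ∀ x, ¬ r ∣ minimalPeriod σ x}

theorem markedCount_zero_succ_succ (r : ℕ) {m k : ℕ} (hk : k ≠ 0) :
    markedCount r (0 : Fin (m + 2)) (k + 1) = (m + 1) * markedCount r (0 : Fin (m + 1)) k := by
  rw [markedCount, card_subtype_perm_fin_succ, Fin.sum_univ_succ]
  have hfixed : Nat.card {τ : Perm (Fin (m + 1)) //
      minimalPeriod (decomposeFin.symm (0, τ)) 0 = k + 1 ∧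
        RegularAwayFrom r (decomposeFin.symm (0, τ)) 0} = 0 := by
    refine Nat.card_eq_zero.mpr (.inl ⟨fun ⟨τ, hτ, _⟩ => hk ?_⟩)
    rw [minimalPeriod_eq_one_iff_isFixedPt.mpr (decomposeFin_symm_apply_zero 0 τ)] at hτ
    omega
  have hmoved (q : Fin (m + 1)) : Nat.card {τ : Perm (Fin (m + 1)) //
      minimalPeriod (decomposeFin.symm (q.succ, τ)) 0 = k + 1 ∧
        RegularAwayFrom r (decomposeFin.symm (q.succ, τ)) 0} =
          markedCount r (0 : Fin (m + 1)) k := by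
    simp only [minimalPeriod_decomposeFin_symm_succ_zero, add_left_inj,
      regularAwayFrom_decomposeFin_symm_succ_zero_iff]
    rw [← markedCount, ← swap_apply_left 0 q, markedCount_perm_apply]
  simp only [hfixed, hmoved, sum_const, card_univ, Fintype.card_fin, smul_eq_mul, zero_add]

theorem markedCount_zero_one (r m : ℕ) : markedCount r (0 : Fin (m + 1)) 1 = regCard r m := by
  rw [markedCount, regCard, card_subtype_perm_fin_succ, Fin.sum_univ_succ]
  have hmoved (q : Fin m) : Nat.card {τ : Perm (Fin m) //
      minimalPeriod (decomposeFin.symm (q.succ, τ)) 0 = 1 ∧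
        RegularAwayFrom r (decomposeFin.symm (q.succ, τ)) 0} = 0 := by
    refine Nat.card_eq_zero.mpr (.inl ⟨fun ⟨τ, hτ, _⟩ => ?_⟩)
    rw [minimalPeriod_decomposeFin_symm_succ_zero] at hτ
    exact (minimalPeriod_pos τ q).ne' (by omega)
  simp only [hmoved, sum_const_zero, add_zero, regularAwayFrom_decomposeFin_symm_zero_zero_iff,
    minimalPeriod_eq_one_iff_isFixedPt.mpr (decomposeFin_symm_apply_zero _ _), true_and]

theorem regCard_succ_eq_sum_markedCount (r m : ℕ) :
    regCard r (m + 1) =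
      ∑ k ∈ range (m + 2), if r ∣ k then 0 else markedCount r (0 : Fin (m + 1)) k := by
  have hle (σ : Perm (Fin (m + 1))) : minimalPeriod σ 0 ≤ m + 1 :=
    minimalPeriod_le_card.trans_eq (Fintype.card_fin _)
  rw [regCard, Nat.card_subtype_eq_sum_card_fiberwise
    (P := fun σ : Perm (Fin (m + 1)) => ∀ x, ¬ r ∣ minimalPeriod σ x)
    (f := fun σ => minimalPeriod σ 0) fun σ _ => mem_range.mpr (Nat.lt_succ_of_le (hle σ))]
  refine sum_congr rfl fun k _ => ?_
  split_ifs with hk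
  · exact Nat.card_eq_zero.mpr (.inl ⟨fun ⟨σ, hσ, hσ0⟩ => hσ 0 (hσ0 ▸ hk)⟩)
  · refine Nat.card_congr (subtypeEquivRight fun σ => ?_)
    rw [forall_not_dvd_minimalPeriod_iff 0]
    constructor
    · rintro ⟨⟨-, h⟩, hσ0⟩
      exact ⟨hσ0, h⟩
    · rintro ⟨hσ0, h⟩
      exact ⟨⟨hσ0 ▸ hk, h⟩, hσ0⟩

theorem markedCount_zero_succ (r : ℕ) {m k : ℕ} (hk : k ≤ m) :
    markedCount r (0 : Fin (m + 1)) (k + 1) = m.descFactorial k * regCard r (m - k) := by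
  induction k generalizing m with
  | zero => simp [markedCount_zero_one]
  | succ k ih =>
    obtain ⟨m, rfl⟩ : ∃ m', m = m' + 1 := ⟨m - 1, by omega⟩
    rw [markedCount_zero_succ_succ r k.succ_ne_zero, ih (by omega),
      Nat.succ_descFactorial_succ, Nat.add_sub_add_right, mul_assoc]

theorem regCard_succ (r m : ℕ) :
    regCard r (m + 1) = ∑ k ∈ range (m + 1),
      if r ∣ k + 1 then 0 else m.descFactorial k * regCard r (m - k) := by
  rw [regCard_succ_eq_sum_markedCount, sum_range_succ', if_pos (dvd_zero r), add_zero]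
  refine sum_congr rfl fun k hk => ?_
  rw [markedCount_zero_succ r (Nat.lt_succ_iff.mp (mem_range.mp hk))]

end Equiv.Perm

theorem eq_succ_mul_of_recurrence {r : ℕ} {a : ℕ → ℕ}
    (ha : ∀ m, a (m + 1) = ∑ k ∈ range (m + 1),
      if r ∣ k + 1 then 0 else m.descFactorial k * a (m - k))
    (n : ℕ) (hn : ¬ r ∣ n + 1) : a (n + 1) = (n + 1) * a n := by
  induction n using Nat.strong_induction_on with | _ n ih => ?_
  rcases n with _ | m
  · simpa [hn] using ha 0
  have hr : ¬ r ∣ 1 := fun h => hn (h.trans (one_dvd _))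
  set f := fun k => m.descFactorial k * a (m - k)
  have hf (k : ℕ) (hk : k < m) (hk2 : r ∣ k + 2) : f (k + 1) = f k := by
    have hmk : ¬ r ∣ m - (k + 1) + 1 := fun h => hn <| by
      have := dvd_add h hk2
      rwa [show m - (k + 1) + 1 + (k + 2) = m + 1 + 1 by omega] at this
    have hrec := ih (m - (k + 1)) (by omega) hmk
    rw [show m - (k + 1) + 1 = m - k by omega] at hrec
    simp only [f, Nat.descFactorial_succ, hrec]
    ring
  have hshift : a (m + 1) = ∑ k ∈ range (m + 1), if r ∣ k + 2 then 0 else f k := by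
    rw [ha m, sum_range_ite_dvd_shift hr f m hf, if_neg hn, add_zero]
  calc a (m + 1 + 1)
      = ∑ k ∈ range (m + 1), (m + 1) * (if r ∣ k + 2 then 0 else f k) + a (m + 1) := by
        rw [ha (m + 1), sum_range_succ', if_neg hr, Nat.descFactorial_zero, one_mul]
        refine congrArg₂ (· + ·) (sum_congr rfl fun k _ => ?_) rfl
        simp only [f, mul_ite, mul_zero, Nat.succ_descFactorial_succ, Nat.add_sub_add_right,
          mul_assoc]
    _ = (m + 1 + 1) * a (m + 1) := by rw [← mul_sum, ← hshift]; ring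

theorem stmt3_general (r n : ℕ) (h : ¬ r ∣ (n + 1)) :
    Nat.card {σ : Equiv.Perm (Fin (n + 1)) //
        ∀ x, ¬ r ∣ Function.minimalPeriod ⇑σ x} =
      (n + 1) * Nat.card {σ : Equiv.Perm (Fin n) //
        ∀ x, ¬ r ∣ Function.minimalPeriod ⇑σ x} :=
  eq_succ_mul_of_recurrence (Equiv.Perm.regCard_succ r) n h

/-- if `r ∤ n+1` then `|Reg_r(n+1)| = (n+1)·|Reg_r(n)|`. -/
theorem stmt3 (r n : ℕ) (hr : 2 ≤ r) (hn : 1 ≤ n) (h : ¬ r ∣ (n + 1)) :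
    Nat.card {σ : Equiv.Perm (Fin (n + 1)) //
        ∀ x, ¬ r ∣ Function.minimalPeriod ⇑σ x} =
      (n + 1) * Nat.card {σ : Equiv.Perm (Fin n) //
        ∀ x, ¬ r ∣ Function.minimalPeriod ⇑σ x} :=
  stmt3_general r n h
end

section
/- For n ≥ 1 and k ≥ 1, the number of permutations of {1,...,2n} with all cycle lengths odd and with the element 1 in a cycle of length 2k-1 equals the number of permutations of {1,...,2n} with all cycles of odd length except that the cycle containing 1 has even length 2k; both equal (2n-1)!/(2n-2k)! · ((2n-2k-1)!!)^2. -/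
/-!
A permutation `σ` whose cycle through `x` has length `c + 1` is determined by the injective
sequence `x, σ x, …, σ^c x`, for which there are `(N-1)(N-2)⋯(N-c)` choices, together with its
restriction to the complement of that cycle. Hence, writing `a m` (`oddCyclePermCount m`) for the
number of permutations of `m` points with only odd cycles, `|A_{2n,2k-1}| = (2n-1)⋯(2n-2k+2) · a (2n-2k+1)` and
`|P_{2n,2k}| = (2n-1)⋯(2n-2k+1) · a (2n-2k)`. Sorting the permutations counted by `a (m + 2)` by
the length of the cycle through a fixed point gives `a (m + 2) = a (m + 1) + (m + 1) m a m`, whence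
`a (2j + 1) = (2j + 1) a (2j)` and `a (2j) = ((2j - 1)‼)²`.
-/

open Function Finset
open scoped Nat

theorem Function.Semiconj.minimalPeriod_eq {α β : Type*} {e : α → β} {f : α → α} {g : β → β}
    (h : Semiconj e f g) (he : Injective e) (x : α) :
    minimalPeriod g (e x) = minimalPeriod f x := by
  refine minimalPeriod_eq_minimalPeriod_iff.2 fun n => ?_
  simp only [IsPeriodicPt, IsFixedPt, ← (h.iterate_right n).eq, he.eq_iff]

theorem card_embedding_fin_succ_apply_zero_eq {α : Type*} [Fintype α] (x : α) (c : ℕ) :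
    Nat.card {v : Fin (c + 1) ↪ α // v 0 = x} = (Fintype.card α - 1).descFactorial c := by
  classical
  let e : {v : Fin (c + 1) ↪ α // v 0 = x} ≃ {w : Fin c ↪ α // ∀ i, w i ∈ ({x}ᶜ : Set α)} :=
    { toFun v := ⟨(Fin.succEmb c).trans v,
        fun i h => Fin.succ_ne_zero i (v.1.injective (h.trans v.2.symm))⟩
      invFun w := ⟨⟨Fin.cons x w.1,
        Fin.cons_injective_iff.2 ⟨fun ⟨i, hi⟩ => w.2 i hi, w.1.injective⟩⟩, rfl⟩
      left_inv v := by
        ext i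
        cases i using Fin.cases <;> simp [v.2]
      right_inv w := by ext; simp }
  rw [Nat.card_congr (e.trans (Equiv.codRestrict _ _)), Nat.card_eq_fintype_card,
    Fintype.card_embedding_eq]
  simp [filter_ne', card_univ]

namespace Equiv.Perm

variable {α β : Type*}

theorem minimalPeriod_permCongr_apply (e : α ≃ β) (σ : Perm α) (y : α) :
    minimalPeriod (e.permCongr σ) (e y) = minimalPeriod σ y :=
  Semiconj.minimalPeriod_eq (fun z => by simp [permCongr_apply]) e.injective y

theorem card_forall_minimalPeriod_congr (p : ℕ → Prop) (e : α ≃ β) :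
    Nat.card {σ : Perm α // ∀ y, p (minimalPeriod σ y)} =
      Nat.card {σ : Perm β // ∀ y, p (minimalPeriod σ y)} :=
  Nat.card_congr <| e.permCongr.subtypeEquiv fun σ => by
    simp only [← e.forall_congr_right, minimalPeriod_permCongr_apply]

theorem forall_minimalPeriod_iff_off_orbit [Finite α] {p : ℕ → Prop} {σ : Perm α} {x : α}
    (hx : p (minimalPeriod σ x)) :
    (∀ y, p (minimalPeriod σ y)) ↔ ∀ y, (∀ i : ℕ, (σ ^ i) x ≠ y) → p (minimalPeriod σ y) := by
  refine ⟨fun h y _ => h y, fun h y => ?_⟩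
  by_cases hy : ∀ i : ℕ, (σ ^ i) x ≠ y
  · exact h y hy
  · obtain ⟨i, rfl⟩ := not_forall_not.1 hy
    rwa [← iterate_eq_pow, minimalPeriod_apply_iterate (σ.injective.mem_periodicPts x)]

variable {c : ℕ}

open scoped Classical in
/-- The permutation cycling `v 0 ↦ v 1 ↦ ⋯ ↦ v c ↦ v 0` and acting as `τ` off the range of `v`. -/
noncomputable def glueCycle (v : Fin (c + 1) ↪ α) (τ : Perm {y // y ∉ Set.range v}) : Perm α :=
  subtypeCongr ((ofInjective v v.injective).permCongr (finRotate (c + 1))) τ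

section glueCycle

variable (v : Fin (c + 1) ↪ α) (τ : Perm {y // y ∉ Set.range v})

theorem glueCycle_apply_embedding (i : Fin (c + 1)) : glueCycle v τ (v i) = v (i + 1) := by
  have h1 : (ofInjective v v.injective).symm ⟨v i, Set.mem_range_self i⟩ = i :=
    (ofInjective v v.injective).symm_apply_apply i
  classical
  rw [glueCycle, subtypeCongr.left_apply _ _ (Set.mem_range_self i)]
  simp [permCongr_apply, h1]

theorem glueCycle_apply_of_notMem {y : α} (hy : y ∉ Set.range v) :
    glueCycle v τ y = τ ⟨y, hy⟩ := by
  classical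
  rw [glueCycle, subtypeCongr.right_apply _ _ hy]

open Fin.NatCast in
theorem glueCycle_pow_apply_zero (j : ℕ) : (glueCycle v τ ^ j) (v 0) = v j := by
  induction j with
  | zero => simp
  | succ j ih => rw [pow_succ', mul_apply, ih, glueCycle_apply_embedding, Nat.cast_succ]

theorem minimalPeriod_glueCycle_zero : minimalPeriod (glueCycle v τ) (v 0) = c + 1 := by
  open Fin.NatCast in
  have key (m : ℕ) : IsPeriodicPt (glueCycle v τ) m (v 0) ↔ c + 1 ∣ m := by
    rw [IsPeriodicPt, IsFixedPt, iterate_eq_pow, glueCycle_pow_apply_zero, v.apply_eq_iff_eq,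
      Fin.natCast_eq_zero]
  exact Nat.dvd_antisymm ((key _).2 dvd_rfl).minimalPeriod_dvd
    ((key _).1 (isPeriodicPt_minimalPeriod _ _))

theorem minimalPeriod_glueCycle_of_notMem (z : {y // y ∉ Set.range v}) :
    minimalPeriod (glueCycle v τ) z = minimalPeriod τ z :=
  Semiconj.minimalPeriod_eq (fun z => (glueCycle_apply_of_notMem v τ z.2).symm)
    Subtype.val_injective z

theorem forall_off_orbit_glueCycle_iff (p : ℕ → Prop) :
    (∀ y, (∀ i : ℕ, (glueCycle v τ ^ i) (v 0) ≠ y) → p (minimalPeriod (glueCycle v τ) y)) ↔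
      ∀ z, p (minimalPeriod τ z) := by
  have horbit (y : α) : (∀ i : ℕ, (glueCycle v τ ^ i) (v 0) ≠ y) ↔ y ∉ Set.range v := by
    simp only [glueCycle_pow_apply_zero, Set.mem_range, not_exists]
    exact ⟨fun h i => by simpa using h i, fun h i => h _⟩
  simp only [horbit, Subtype.forall, ← minimalPeriod_glueCycle_of_notMem v τ]

end glueCycle

theorem eq_of_glueCycle_eq {v v' : Fin (c + 1) ↪ α} {τ : Perm {y // y ∉ Set.range v}}
    {τ' : Perm {y // y ∉ Set.range v'}} (h : glueCycle v τ = glueCycle v' τ') (h0 : v 0 = v' 0) :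
    v = v' := by
  ext i
  rw [← Fin.cast_val_eq_self i, ← glueCycle_pow_apply_zero v τ, ← glueCycle_pow_apply_zero v' τ',
    h, h0]

theorem glueCycle_injective (v : Fin (c + 1) ↪ α) : Injective (glueCycle v) := fun τ τ' h =>
  ext fun z => Subtype.ext <| by
    rw [← glueCycle_apply_of_notMem v τ z.2, ← glueCycle_apply_of_notMem v τ' z.2, h]

open Fin.NatCast in
theorem exists_glueCycle_eq [Finite α] (σ : Perm α) {x : α} (h : minimalPeriod σ x = c + 1) :
    ∃ v : Fin (c + 1) ↪ α, v 0 = x ∧ ∃ τ, glueCycle v τ = σ := by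
  have hinj : Injective fun i : Fin (c + 1) => (σ ^ (i : ℕ)) x := fun i j hij =>
    Fin.ext <| iterate_injOn_Iio_minimalPeriod (f := σ) (x := x) (by simp [h, i.is_lt])
      (by simp [h, j.is_lt]) (by simpa only [iterate_eq_pow] using hij)
  let v : Fin (c + 1) ↪ α := ⟨_, hinj⟩
  have hv (j : ℕ) : v j = (σ ^ j) x := by
    simp only [v, Embedding.coeFn_mk, Fin.val_natCast, ← iterate_eq_pow, ← h]
    exact iterate_mod_minimalPeriod_eq
  have hrange (y : α) : y ∈ Set.range v ↔ SameCycle σ x y := by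
    refine ⟨?_, fun hy => ?_⟩
    · rintro ⟨i, rfl⟩
      exact ⟨i, by rw [zpow_natCast]; rfl⟩
    · obtain ⟨i, -, rfl⟩ := hy.exists_pow_eq'
      exact ⟨i, hv i⟩
  have hinv (y : α) : σ y ∉ Set.range v ↔ y ∉ Set.range v := by
    simp only [hrange, sameCycle_apply_right]
  refine ⟨v, by simp [v], σ.subtypePerm hinv, ?_⟩
  ext y
  by_cases hy : y ∈ Set.range v
  · obtain ⟨i, rfl⟩ := hy
    rw [glueCycle_apply_embedding, ← Fin.cast_val_eq_self i, ← Nat.cast_succ, hv, hv, pow_succ',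
      mul_apply]
  · exact glueCycle_apply_of_notMem v _ hy

theorem card_minimalPeriod_eq_and_off_orbit [Fintype α] (p : ℕ → Prop) (x : α)
    (c : ℕ) :
    Nat.card {σ : Perm α // minimalPeriod σ x = c + 1 ∧
        ∀ y, (∀ i : ℕ, (σ ^ i) x ≠ y) → p (minimalPeriod σ y)} =
      (Fintype.card α - 1).descFactorial c *
        Nat.card {τ : Perm (Fin (Fintype.card α - (c + 1))) // ∀ y, p (minimalPeriod τ y)} := by
  classical
  let F : (Σ v : {v : Fin (c + 1) ↪ α // v 0 = x},
      {τ : Perm {y // y ∉ Set.range v.1} // ∀ z, p (minimalPeriod τ z)}) →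
      {σ : Perm α // minimalPeriod σ x = c + 1 ∧
        ∀ y, (∀ i : ℕ, (σ ^ i) x ≠ y) → p (minimalPeriod σ y)} := fun s =>
    ⟨glueCycle s.1.1 s.2.1, by
      obtain ⟨⟨v, rfl⟩, τ, hτ⟩ := s
      exact ⟨minimalPeriod_glueCycle_zero v τ, (forall_off_orbit_glueCycle_iff v τ p).2 hτ⟩⟩
  have hF : Bijective F := by
    refine ⟨?_, ?_⟩
    · rintro ⟨⟨v, hv⟩, τ, _⟩ ⟨⟨v', hv'⟩, τ', _⟩ h
      have hσ : glueCycle v τ = glueCycle v' τ' := congrArg Subtype.val h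
      subst hv
      obtain rfl := eq_of_glueCycle_eq hσ hv'.symm
      obtain rfl := glueCycle_injective v hσ
      rfl
    · rintro ⟨σ, hper, hp⟩
      obtain ⟨v, rfl, τ, rfl⟩ := exists_glueCycle_eq σ hper
      exact ⟨⟨⟨v, rfl⟩, τ, (forall_off_orbit_glueCycle_iff v τ p).1 hp⟩, rfl⟩
  have hfiber (v : Fin (c + 1) ↪ α) :
      Nat.card {τ : Perm {y // y ∉ Set.range v} // ∀ z, p (minimalPeriod τ z)} =
        Nat.card {τ : Perm (Fin (Fintype.card α - (c + 1))) // ∀ y, p (minimalPeriod τ y)} := by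
    refine card_forall_minimalPeriod_congr p (Fintype.equivFinOfCardEq ?_)
    rw [Fintype.card_subtype_compl, Fintype.card_range, Fintype.card_fin]
  rw [← Nat.card_eq_of_bijective F hF, Nat.card_sigma]
  simp only [hfiber, sum_const, card_univ, smul_eq_mul, ← Nat.card_eq_fintype_card,
    card_embedding_fin_succ_apply_zero_eq]

theorem card_eq_sum_card_minimalPeriod_eq [Fintype α] (P : Perm α → Prop) (x : α) :
    Nat.card {σ : Perm α // P σ} =
      ∑ c ∈ range (Fintype.card α), Nat.card {σ : Perm α // minimalPeriod σ x = c + 1 ∧ P σ} := by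
  classical
  have hmem (σ : Perm α) : minimalPeriod σ x - 1 ∈ range (Fintype.card α) := by
    have := minimalPeriod_pos_of_mem_periodicPts (σ.injective.mem_periodicPts x)
    have := minimalPeriod_le_card (f := σ) (x := x)
    rw [mem_range]
    omega
  rw [Nat.card_eq_fintype_card, Fintype.card_subtype,
    card_eq_sum_card_fiberwise fun σ _ => hmem σ]
  refine sum_congr rfl fun c _ => ?_
  rw [Nat.card_eq_fintype_card, Fintype.card_subtype, filter_filter]
  congr 1
  ext σ
  have := minimalPeriod_pos_of_mem_periodicPts (σ.injective.mem_periodicPts x)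
  rw [mem_filter, and_iff_right (mem_univ σ), and_comm, Nat.sub_eq_iff_eq_add this]
  simp

end Equiv.Perm

open Equiv

noncomputable def oddCyclePermCount (m : ℕ) : ℕ :=
  Nat.card {σ : Perm (Fin m) // ∀ y, Odd (minimalPeriod σ y)}

theorem card_minimalPeriod_eq_and_forall_odd {α : Type*} [Fintype α] (x : α) {c : ℕ}
    (hc : Even c) :
    Nat.card {σ : Perm α // minimalPeriod σ x = c + 1 ∧ ∀ y, Odd (minimalPeriod σ y)} =
      (Fintype.card α - 1).descFactorial c * oddCyclePermCount (Fintype.card α - (c + 1)) :=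
  (Nat.card_congr <| subtypeEquivRight fun _ => and_congr_right fun h =>
    Perm.forall_minimalPeriod_iff_off_orbit (h ▸ hc.add_one)).trans
    (Perm.card_minimalPeriod_eq_and_off_orbit Odd x c)

theorem oddCyclePermCount_zero : oddCyclePermCount 0 = 1 := by
  simp [oddCyclePermCount]

theorem oddCyclePermCount_succ (m : ℕ) :
    oddCyclePermCount (m + 1) =
      ∑ c ∈ range (m + 1), if Even c then m.descFactorial c * oddCyclePermCount (m - c) else 0 := by
  rw [oddCyclePermCount, Perm.card_eq_sum_card_minimalPeriod_eq _ 0, Fintype.card_fin]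
  refine sum_congr rfl fun c _ => ?_
  split_ifs with hc
  · simpa using card_minimalPeriod_eq_and_forall_odd (0 : Fin (m + 1)) hc
  · have : IsEmpty {σ : Perm (Fin (m + 1)) //
        minimalPeriod σ 0 = c + 1 ∧ ∀ y, Odd (minimalPeriod σ y)} :=
      ⟨fun ⟨σ, hper, hodd⟩ => hc (by simpa [hper, Nat.odd_add_one] using hodd 0)⟩
    exact Nat.card_of_isEmpty

theorem oddCyclePermCount_add_two (m : ℕ) :
    oddCyclePermCount (m + 2) =
      oddCyclePermCount (m + 1) + (m + 1) * m * oddCyclePermCount m := by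
  cases m with
  | zero => simp [oddCyclePermCount_succ 1, sum_range_succ]
  | succ m =>
    rw [oddCyclePermCount_succ (m + 2), sum_range_succ', sum_range_succ',
      oddCyclePermCount_succ m, mul_sum]
    have hterm (c : ℕ) : (if Even (c + 1 + 1) then (m + 2).descFactorial (c + 1 + 1) *
        oddCyclePermCount (m + 2 - (c + 1 + 1)) else 0) = (m + 1 + 1) * (m + 1) *
          if Even c then m.descFactorial c * oddCyclePermCount (m - c) else 0 := by
      simp only [Nat.even_add_one, not_not, Nat.succ_descFactorial_succ, Nat.add_sub_add_right]
      split_ifs <;> ring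
    rw [sum_congr rfl fun c _ => hterm c]
    have h0 : Even 0 := ⟨0, rfl⟩
    simp only [Nat.even_add_one, zero_add, h0, not_true_eq_false, if_true, if_false, add_zero,
      Nat.descFactorial_zero, one_mul, Nat.sub_zero]
    ring

theorem oddCyclePermCount_two_mul_add_one (j : ℕ) :
    oddCyclePermCount (2 * j + 1) = (2 * j + 1) * oddCyclePermCount (2 * j) := by
  induction j with
  | zero => simpa using oddCyclePermCount_succ 0
  | succ j ih =>
    have h2 : oddCyclePermCount (2 * j + 2) = (2 * j + 1) * oddCyclePermCount (2 * j + 1) := by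
      rw [oddCyclePermCount_add_two, ih]
      ring
    rw [show 2 * (j + 1) + 1 = 2 * j + 1 + 2 by ring, oddCyclePermCount_add_two,
      show 2 * j + 1 + 1 = 2 * j + 2 by ring, h2, show 2 * (j + 1) = 2 * j + 2 by ring, h2]
    ring

theorem oddCyclePermCount_two_mul_add_two (j : ℕ) :
    oddCyclePermCount (2 * j + 2) = (2 * j + 1) ^ 2 * oddCyclePermCount (2 * j) := by
  rw [oddCyclePermCount_add_two, oddCyclePermCount_two_mul_add_one]
  ring

theorem oddCyclePermCount_two_mul (j : ℕ) :
    oddCyclePermCount (2 * j) = (2 * j - 1)‼ ^ 2 := by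
  induction j with
  | zero => simp [oddCyclePermCount_zero]
  | succ j ih =>
    rw [show 2 * (j + 1) = 2 * j + 2 by ring, oddCyclePermCount_two_mul_add_two, ih,
      show 2 * j + 2 - 1 = 2 * j + 1 by omega, Nat.doubleFactorial_add_one]
    ring

/-- `|A_{2n,2k-1}| = |P_{2n,2k}| = (2n-1)!/(2n-2k)! · ((2n-2k-1)!!)^2`. -/
theorem stmt7 (n k : ℕ) (hk : 1 ≤ k) (hkn : k ≤ n) :
    Nat.card {σ : Equiv.Perm (Fin (2 * n)) //
        Function.minimalPeriod ⇑σ (⟨0, by omega⟩ : Fin (2 * n)) = 2 * k - 1 ∧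
          ∀ y, Odd (Function.minimalPeriod ⇑σ y)} =
      Nat.card {σ : Equiv.Perm (Fin (2 * n)) //
        Function.minimalPeriod ⇑σ (⟨0, by omega⟩ : Fin (2 * n)) = 2 * k ∧
          ∀ y, (∀ i : ℕ, (σ ^ i) (⟨0, by omega⟩ : Fin (2 * n)) ≠ y) →
            Odd (Function.minimalPeriod ⇑σ y)} ∧
    Nat.card {σ : Equiv.Perm (Fin (2 * n)) //
        Function.minimalPeriod ⇑σ (⟨0, by omega⟩ : Fin (2 * n)) = 2 * k - 1 ∧
          ∀ y, Odd (Function.minimalPeriod ⇑σ y)} * Nat.factorial (2 * n - 2 * k) =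
      Nat.factorial (2 * n - 1) * (Nat.doubleFactorial (2 * n - 2 * k - 1)) ^ 2 := by
  obtain ⟨k, rfl⟩ : ∃ k', k = k' + 1 := ⟨k - 1, by omega⟩
  obtain ⟨j, rfl⟩ : ∃ j, n = k + 1 + j := ⟨n - (k + 1), by omega⟩
  have hA := card_minimalPeriod_eq_and_forall_odd (⟨0, by omega⟩ : Fin (2 * (k + 1 + j)))
    (even_two_mul k)
  have hP : _ = _ * oddCyclePermCount _ := Perm.card_minimalPeriod_eq_and_off_orbit Odd
    (⟨0, by omega⟩ : Fin (2 * (k + 1 + j))) (2 * k + 1)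
  have hN : 2 * (k + 1 + j) - 1 = 2 * k + 2 * j + 1 := by omega
  rw [Fintype.card_fin, hN, show 2 * (k + 1 + j) - (2 * k + 1) = 2 * j + 1 by omega,
    oddCyclePermCount_two_mul_add_one] at hA
  rw [Fintype.card_fin, hN, show 2 * (k + 1 + j) - (2 * k + 1 + 1) = 2 * j by omega] at hP
  rw [show 2 * (k + 1) - 1 = 2 * k + 1 by omega, show 2 * (k + 1) = 2 * k + 1 + 1 by ring, hA, hP,
    hN, show 2 * (k + 1 + j) - (2 * k + 1 + 1) = 2 * j by omega, Nat.descFactorial_succ,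
    show 2 * k + 2 * j + 1 - 2 * k = 2 * j + 1 by omega, ← oddCyclePermCount_two_mul]
  refine ⟨by ring, ?_⟩
  rw [← Nat.factorial_mul_descFactorial (show 2 * k ≤ 2 * k + 2 * j + 1 by omega),
    show 2 * k + 2 * j + 1 - 2 * k = 2 * j + 1 by omega, Nat.factorial_succ]
  ring
end
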